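/- arXiv:2605.16645 — 3 statements merged into one kernel-verified Lean document; each statement's English description precedes it below -/
import Mathlib

section
/- Let μ₁, ν₁ ∈ ℝ^d, let Σ be a positive definite d×d matrix, and let α, ε ≥ 0. Define Δ = ‖Σ^{−1/2}(μ₁ − ν₁)‖₂ and the set R = { μ ∈ ℝ^d : ⟨μ₁−μ, Σ⁻¹(μ₁−μ)⟩ ≥ α² and ⟨ν₁−μ, Σ⁻¹(ν₁−μ)⟩ ≤ ε² }. Then R is empty if and only if Δ + ε < α. -/
/-!
Whitening by `μ ↦ Σ^{-1/2} (μ₁ - μ)` turns `R` into the set of `x` in Euclidean space with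
`‖x‖ ≥ α` and `‖x - w‖ ≤ ε`, where `‖w‖ = Δ`. By the triangle inequality such an `x` has
`α ≤ ‖x‖ ≤ Δ + ε`, and conversely `x = w + ε u`, with `u` a unit vector pointing along `w`,
has norm exactly `Δ + ε`.
-/

open Matrix

theorem Matrix.dotProduct_mulVec_inv_mul_self {n R : Type*} [Fintype n] [DecidableEq n]
    [CommRing R] {S : Matrix n n R} (hS : S.IsSymm) (v : n → R) :
    v ⬝ᵥ (S * S)⁻¹ *ᵥ v = S⁻¹ *ᵥ v ⬝ᵥ S⁻¹ *ᵥ v := by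
  rw [Matrix.mul_inv_rev, ← mulVec_mulVec, dotProduct_mulVec, ← mulVec_transpose,
    transpose_nonsing_inv, hS.eq]

theorem EuclideanSpace.norm_toLp_sq {n : Type*} [Fintype n] (x : n → ℝ) :
    ‖WithLp.toLp 2 x‖ ^ 2 = x ⬝ᵥ x := by
  rw [← real_inner_self_eq_norm_sq, EuclideanSpace.inner_toLp_toLp]
  simp

theorem exists_le_norm_and_norm_sub_le_iff {E : Type*} [NormedAddCommGroup E]
    [NormedSpace ℝ E] [Nontrivial E] (w : E) {α ε : ℝ} (hε : 0 ≤ ε) :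
    (∃ x : E, α ≤ ‖x‖ ∧ ‖x - w‖ ≤ ε) ↔ α ≤ ‖w‖ + ε := by
  constructor
  · rintro ⟨x, hαx, hxw⟩
    linarith [norm_le_norm_sub_add x w]
  · intro h
    obtain ⟨u, hu, hwu⟩ : ∃ u : E, ‖u‖ = 1 ∧ SameRay ℝ w u := by
      rcases eq_or_ne w 0 with rfl | hw
      · obtain ⟨u, hu⟩ := exists_norm_eq E zero_le_one
        exact ⟨u, hu, .zero_left u⟩
      · exact ⟨‖w‖⁻¹ • w, norm_smul_inv_norm hw,
          SameRay.sameRay_nonneg_smul_right w (by positivity)⟩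
    have hεu : ‖ε • u‖ = ε := by rw [norm_smul, hu, mul_one, Real.norm_of_nonneg hε]
    refine ⟨w + ε • u, ?_, by rw [add_sub_cancel_left, hεu]⟩
    rwa [(hwu.nonneg_smul_right hε).norm_add, hεu]

theorem stmt_4_general (d : ℕ) (hd : 0 < d) (μ₁ ν₁ : Fin d → ℝ) (C S : Matrix (Fin d) (Fin d) ℝ)
    (hS : S.PosDef) (hSS : S * S = C)
    (α ε : ℝ) (hα : 0 ≤ α) (hε : 0 ≤ ε)
    (Δ : ℝ) (hΔ : Δ = Real.sqrt ((S⁻¹.mulVec (μ₁ - ν₁)) ⬝ᵥ (S⁻¹.mulVec (μ₁ - ν₁))))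
    (R : Set (Fin d → ℝ))
    (hR : R = {μ | α ^ 2 ≤ (μ₁ - μ) ⬝ᵥ (C⁻¹.mulVec (μ₁ - μ)) ∧
                   (ν₁ - μ) ⬝ᵥ (C⁻¹.mulVec (ν₁ - μ)) ≤ ε ^ 2}) :
    R = ∅ ↔ Δ + ε < α := by
  subst hR hSS hΔ
  have : NeZero d := ⟨hd.ne'⟩
  have hS_symm : S.IsSymm := (conjTranspose_eq_transpose_of_trivial S).symm.trans hS.isHermitian
  have hquad (v : Fin d → ℝ) : v ⬝ᵥ (S * S)⁻¹ *ᵥ v = ‖WithLp.toLp 2 (S⁻¹ *ᵥ v)‖ ^ 2 := by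
    rw [dotProduct_mulVec_inv_mul_self hS_symm, EuclideanSpace.norm_toLp_sq]
  set f : (Fin d → ℝ) → EuclideanSpace ℝ (Fin d) := fun μ ↦ WithLp.toLp 2 (S⁻¹ *ᵥ (μ₁ - μ))
  have hf : Function.Surjective f := fun y ↦ ⟨μ₁ - S *ᵥ y.ofLp, by
    simp [f, mulVec_mulVec, nonsing_inv_mul _ (isUnit_iff_ne_zero.mpr hS.det_pos.ne')]⟩
  have hsub (μ : Fin d → ℝ) : f μ - f ν₁ = WithLp.toLp 2 (S⁻¹ *ᵥ (ν₁ - μ)) := by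
    rw [← WithLp.toLp_sub, ← mulVec_sub, sub_sub_sub_cancel_left]
  rw [← Set.not_nonempty_iff_eq_empty, not_iff_comm, not_lt,
    ← EuclideanSpace.norm_toLp_sq, Real.sqrt_sq (norm_nonneg _),
    ← exists_le_norm_and_norm_sub_le_iff (f ν₁) hε, hf.exists]
  simp only [Set.Nonempty, hquad, ← hsub, sq_le_sq₀ hα (norm_nonneg _),
    sq_le_sq₀ (norm_nonneg _) hε]
  rfl

/-- Feasible region for shifted Gaussians: emptiness criterion. `C` is the
covariance matrix `Σ ≻ 0` and `S` its positive-definite square root, so that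
`‖Σ^{-1/2} v‖₂ = √(S⁻¹v ⬝ S⁻¹v)` and `‖Σ^{-1/2} v‖₂² = v ⬝ Σ⁻¹ v`. -/
theorem stmt_4 (d : ℕ) (hd : 0 < d) (μ₁ ν₁ : Fin d → ℝ) (C S : Matrix (Fin d) (Fin d) ℝ)
    (hC : C.PosDef) (hS : S.PosDef) (hSS : S * S = C)
    (α ε : ℝ) (hα : 0 ≤ α) (hε : 0 ≤ ε)
    (Δ : ℝ) (hΔ : Δ = Real.sqrt ((S⁻¹.mulVec (μ₁ - ν₁)) ⬝ᵥ (S⁻¹.mulVec (μ₁ - ν₁))))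
    (R : Set (Fin d → ℝ))
    (hR : R = {μ | α ^ 2 ≤ (μ₁ - μ) ⬝ᵥ (C⁻¹.mulVec (μ₁ - μ)) ∧
                   (ν₁ - μ) ⬝ᵥ (C⁻¹.mulVec (ν₁ - μ)) ≤ ε ^ 2}) :
    R = ∅ ↔ Δ + ε < α :=
  stmt_4_general d hd μ₁ ν₁ C S hS hSS α ε hα hε Δ hΔ R hR
end

section
/- For a, b, c, d > 0, the following are equivalent: (i) there exist s ∈ [0,1] and r ≥ 0 with c = s·a + r and d = s·b + r; (ii) (a,b) and (c,d) are similarly ordered (i.e., either a ≤ b and c ≤ d, or a ≥ b and c ≥ d), and moreover |c − d| ≤ |a − b| and max(a,b)/min(a,b) ≥ max(c,d)/min(c,d). -/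
/-!
Both sides are invariant under swapping `a ↔ b` and `c ↔ d` simultaneously, so we may assume
`a ≤ b`. Then `c = s a + r`, `d = s b + r` amounts to `d - c = s (b - a)` and `r = c - s a`.
For `a < b`, the constraint `s ∈ [0, 1]` becomes `0 ≤ d - c ≤ b - a`, and `r ≥ 0` becomes,
after multiplying by `b - a`, `a d ≤ b c`, which is the ratio condition `d / c ≤ b / a`.
-/

open Set

theorem exists_affine_comm {a b c d : ℝ} :
    (∃ s ∈ Icc (0 : ℝ) 1, ∃ r : ℝ, 0 ≤ r ∧ c = s * a + r ∧ d = s * b + r) ↔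
      ∃ s ∈ Icc (0 : ℝ) 1, ∃ r : ℝ, 0 ≤ r ∧ d = s * b + r ∧ c = s * a + r := by
  simp only [and_comm]

theorem exists_affine_iff_of_le {a b c d : ℝ} (hc : 0 ≤ c) (hab : a ≤ b) :
    (∃ s ∈ Icc (0 : ℝ) 1, ∃ r : ℝ, 0 ≤ r ∧ c = s * a + r ∧ d = s * b + r) ↔
      c ≤ d ∧ d - c ≤ b - a ∧ a * d ≤ b * c := by
  constructor
  · rintro ⟨s, ⟨hs0, hs1⟩, r, hr, rfl, rfl⟩
    have hdiff : s * b + r - (s * a + r) = s * (b - a) := by ring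
    have hcross : b * (s * a + r) - a * (s * b + r) = r * (b - a) := by ring
    refine ⟨?_, ?_, ?_⟩ <;> nlinarith
  · rintro ⟨hcd, hdiff, hcross⟩
    rcases hab.eq_or_lt with rfl | hab
    · exact ⟨0, left_mem_Icc.2 zero_le_one, c, hc, by ring, by linarith⟩
    · have hba : 0 < b - a := sub_pos.2 hab
      refine ⟨(d - c) / (b - a), ⟨by positivity, (div_le_one hba).2 hdiff⟩,
        c - (d - c) / (b - a) * a, ?_, by ring, ?_⟩
      · rw [sub_nonneg, div_mul_eq_mul_div, div_le_iff₀ hba]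
        nlinarith
      · field_simp
        ring

theorem similarlyOrdered_and_abs_sub_le_iff_of_le {a b c d : ℝ} (hab : a ≤ b) :
    ((a ≤ b ∧ c ≤ d) ∨ (b ≤ a ∧ d ≤ c)) ∧ |c - d| ≤ |a - b| ↔ c ≤ d ∧ d - c ≤ b - a := by
  rw [abs_sub_comm c, abs_sub_comm a, abs_of_nonneg (sub_nonneg.2 hab)]
  constructor
  · rintro ⟨⟨-, hcd⟩ | ⟨hba, -⟩, habs⟩
    · exact ⟨hcd, (abs_of_nonneg (sub_nonneg.2 hcd)).symm.le.trans habs⟩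
    · have hdc : |d - c| ≤ 0 := by linarith
      have : d = c := sub_eq_zero.1 (abs_nonpos_iff.1 hdc)
      exact ⟨this.ge, by linarith⟩
  · rintro ⟨hcd, hdiff⟩
    exact ⟨.inl ⟨hab, hcd⟩, by rwa [abs_of_nonneg (sub_nonneg.2 hcd)]⟩

theorem max_div_min_le_max_div_min_iff_of_le {a b c d : ℝ} (ha : 0 < a) (hc : 0 < c)
    (hab : a ≤ b) (hcd : c ≤ d) :
    max c d / min c d ≤ max a b / min a b ↔ a * d ≤ b * c := by
  rw [max_eq_right hab, min_eq_left hab, max_eq_right hcd, min_eq_left hcd,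
    div_le_div_iff₀ hc ha, mul_comm d]

/-- Characterization of affine (thinning–superposition) transport between
positive pairs: `(c,d)` is obtained from `(a,b)` by `c = s·a + r`, `d = s·b + r`
with `s ∈ [0,1]`, `r ≥ 0`, iff the pairs are similarly ordered, `|c-d| ≤ |a-b|`,
and `max(a,b)/min(a,b) ≥ max(c,d)/min(c,d)`. -/
theorem stmt_8 (a b c d : ℝ) (ha : 0 < a) (hb : 0 < b) (hc : 0 < c) (hd : 0 < d) :
    (∃ s ∈ Icc (0 : ℝ) 1, ∃ r : ℝ, 0 ≤ r ∧ c = s * a + r ∧ d = s * b + r) ↔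
      ((a ≤ b ∧ c ≤ d) ∨ (b ≤ a ∧ d ≤ c)) ∧ |c - d| ≤ |a - b| ∧
        max c d / min c d ≤ max a b / min a b := by
  wlog hab : a ≤ b generalizing a b c d
  · rw [exists_affine_comm, this b a d c hb ha hd hc (le_of_not_ge hab), or_comm,
      abs_sub_comm d, abs_sub_comm b, max_comm d, min_comm d, max_comm b, min_comm b]
  rw [exists_affine_iff_of_le hc.le hab, ← and_assoc, ← and_assoc,
    similarlyOrdered_and_abs_sub_le_iff_of_le hab]
  exact and_congr_right fun ⟨hcd, _⟩ ↦
    (max_div_min_le_max_div_min_iff_of_le ha hc hab hcd).symm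
end

section
/- Let μ₁, ν₁ > 0 and let α > 1, 0 < ε < 1. Define R_P = { μ > 0 : ∃ s₁, s₂ ∈ [0,1], r₁, r₂ ≥ 0 with 1 = s₁μ + r₁, α = s₁μ₁ + r₁, μ = s₂ + r₂, ν₁ = s₂ε + r₂ }. Then R_P = [ ν₁, min{ μ₁/α, μ₁ − α + 1, ν₁/ε, ν₁ − ε + 1 } ] provided ν₁ ≤ min{ μ₁/α, μ₁ − α + 1 }, and R_P = ∅ otherwise. -/
/-!
Each of the two systems says that a pair of Poisson means `(x, y)` is carried to `(a, b)` by the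
affine map `t ↦ s t + r` with `s ∈ [0,1]`, `r ≥ 0`. For `x < y` this map is determined by the
two pairs: `s = (b - a)/(y - x)` and `r = (a y - b x)/(y - x)`, so transport is possible iff
`a ≤ b`, `b - a ≤ y - x` and `b x ≤ a y`. For `(μ, μ₁) ↦ (1, α)` and `(ε, 1) ↦ (ν₁, μ)` these
are four linear constraints on `μ`, which cut out the interval of the statement.
-/

open Set

def ThinSupTransport (x y a b : ℝ) : Prop :=
  ∃ s ∈ Icc (0 : ℝ) 1, ∃ r : ℝ, 0 ≤ r ∧ a = s * x + r ∧ b = s * y + r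

namespace ThinSupTransport

variable {x y a b : ℝ}

theorem comm : ThinSupTransport x y a b ↔ ThinSupTransport y x b a := by
  constructor <;>
  · rintro ⟨s, hs, r, hr, ha, hb⟩
    exact ⟨s, hs, r, hr, hb, ha⟩

theorem iff_of_source_lt (hxy : x < y) :
    ThinSupTransport x y a b ↔ a ≤ b ∧ b - a ≤ y - x ∧ b * x ≤ a * y := by
  have hd : 0 < y - x := sub_pos.mpr hxy
  constructor
  · rintro ⟨s, ⟨hs0, hs1⟩, r, hr, rfl, rfl⟩
    exact ⟨by nlinarith, by nlinarith, by nlinarith [mul_nonneg hr hd.le]⟩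
  · rintro ⟨hab, hba, hr⟩
    refine ⟨(b - a) / (y - x), ⟨by positivity, (div_le_one hd).mpr hba⟩,
      a - (b - a) / (y - x) * x, ?_, by ring, by field_simp; ring⟩
    rw [sub_nonneg, div_mul_eq_mul_div, div_le_iff₀ hd]
    linarith

theorem source_lt_of_target_lt (h : ThinSupTransport x y a b) (hab : a < b) : x < y := by
  obtain ⟨s, ⟨hs0, -⟩, r, -, rfl, rfl⟩ := h
  by_contra! hyx
  nlinarith

theorem iff_of_target_lt (hab : a < b) :
    ThinSupTransport x y a b ↔ b - a ≤ y - x ∧ b * x ≤ a * y := by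
  constructor
  · intro h
    exact ((iff_of_source_lt (h.source_lt_of_target_lt hab)).mp h).2
  · rintro ⟨hba, hxy⟩
    exact (iff_of_source_lt (by linarith)).mpr ⟨hab.le, hba, hxy⟩

end ThinSupTransport

theorem thinSupTransport_both_iff {μ₁ ν₁ α ε : ℝ} (hν₁ : 0 < ν₁) (hα : 1 < α) (hε0 : 0 < ε)
    (hε1 : ε < 1) (μ : ℝ) :
    (0 < μ ∧ ThinSupTransport μ μ₁ 1 α ∧ ThinSupTransport 1 ε μ ν₁) ↔
      ν₁ ≤ μ ∧ μ ≤ μ₁ / α ∧ μ ≤ μ₁ - α + 1 ∧ μ ≤ ν₁ / ε ∧ μ ≤ ν₁ - ε + 1 := by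
  rw [ThinSupTransport.iff_of_target_lt hα, ThinSupTransport.comm,
    ThinSupTransport.iff_of_source_lt hε1, le_div_iff₀ (by linarith), le_div_iff₀ hε0]
  constructor
  · rintro ⟨-, ⟨hμμ₁, hμα⟩, hν₁μ, hμν₁, hμε⟩
    exact ⟨hν₁μ, by linarith, by linarith, by linarith, by linarith⟩
  · rintro ⟨hν₁μ, hμα, hμμ₁, hμε, hμν₁⟩
    exact ⟨by linarith, ⟨by linarith, by linarith⟩, hν₁μ, by linarith, by linarith⟩

theorem stmt_14_general (μ₁ ν₁ α ε : ℝ) (hν₁ : 0 < ν₁)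
    (hα : 1 < α) (hε0 : 0 < ε) (hε1 : ε < 1)
    (RP : Set ℝ)
    (hRP : RP = { μ : ℝ | 0 < μ ∧ ∃ s₁ ∈ Icc (0 : ℝ) 1, ∃ s₂ ∈ Icc (0 : ℝ) 1,
        ∃ r₁ : ℝ, 0 ≤ r₁ ∧ ∃ r₂ : ℝ, 0 ≤ r₂ ∧
          1 = s₁ * μ + r₁ ∧ α = s₁ * μ₁ + r₁ ∧ μ = s₂ + r₂ ∧ ν₁ = s₂ * ε + r₂ }) :
    (ν₁ ≤ min (μ₁ / α) (μ₁ - α + 1) →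
      RP = Icc ν₁ (min (μ₁ / α) (min (μ₁ - α + 1) (min (ν₁ / ε) (ν₁ - ε + 1))))) ∧
    (¬ ν₁ ≤ min (μ₁ / α) (μ₁ - α + 1) → RP = ∅) := by
  have hmem : ∀ μ, μ ∈ RP ↔
      ν₁ ≤ μ ∧ μ ≤ μ₁ / α ∧ μ ≤ μ₁ - α + 1 ∧ μ ≤ ν₁ / ε ∧ μ ≤ ν₁ - ε + 1 := by
    intro μ
    rw [← thinSupTransport_both_iff hν₁ hα hε0 hε1, hRP, mem_ofPred_eq]
    simp only [ThinSupTransport, mul_one]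
    constructor
    · rintro ⟨hμ, s₁, hs₁, s₂, hs₂, r₁, hr₁, r₂, hr₂, h₁, h₂, h₃, h₄⟩
      exact ⟨hμ, ⟨s₁, hs₁, r₁, hr₁, h₁, h₂⟩, ⟨s₂, hs₂, r₂, hr₂, h₃, h₄⟩⟩
    · rintro ⟨hμ, ⟨s₁, hs₁, r₁, hr₁, h₁, h₂⟩, ⟨s₂, hs₂, r₂, hr₂, h₃, h₄⟩⟩
      exact ⟨hμ, s₁, hs₁, s₂, hs₂, r₁, hr₁, r₂, hr₂, h₁, h₂, h₃, h₄⟩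
  constructor
  · intro _
    ext μ
    rw [hmem, mem_Icc, le_min_iff, le_min_iff, le_min_iff]
  · intro hν₁_gt
    ext μ
    simp only [hmem, mem_empty_iff_false, iff_false]
    rintro ⟨hν₁μ, hμα, hμμ₁, -, -⟩
    exact hν₁_gt (le_min (hν₁μ.trans hμα) (hν₁μ.trans hμμ₁))

/-- Feasible region for the Poisson family via thinning–superposition transport. -/
theorem stmt_14 (μ₁ ν₁ α ε : ℝ) (hμ₁ : 0 < μ₁) (hν₁ : 0 < ν₁)
    (hα : 1 < α) (hε0 : 0 < ε) (hε1 : ε < 1)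
    (RP : Set ℝ)
    (hRP : RP = { μ : ℝ | 0 < μ ∧ ∃ s₁ ∈ Icc (0 : ℝ) 1, ∃ s₂ ∈ Icc (0 : ℝ) 1,
        ∃ r₁ : ℝ, 0 ≤ r₁ ∧ ∃ r₂ : ℝ, 0 ≤ r₂ ∧
          1 = s₁ * μ + r₁ ∧ α = s₁ * μ₁ + r₁ ∧ μ = s₂ + r₂ ∧ ν₁ = s₂ * ε + r₂ }) :
    (ν₁ ≤ min (μ₁ / α) (μ₁ - α + 1) →
      RP = Icc ν₁ (min (μ₁ / α) (min (μ₁ - α + 1) (min (ν₁ / ε) (ν₁ - ε + 1))))) ∧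
    (¬ ν₁ ≤ min (μ₁ / α) (μ₁ - α + 1) → RP = ∅) :=
  stmt_14_general μ₁ ν₁ α ε hν₁ hα hε0 hε1 RP hRP
end
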